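/- Semantic soundness of the induction rule for star: Let S be a type (of states), T a set of traces over S, and V a set of states. If V ⊆ box(T, V), then V ⊆ box(T*, V); that is, if from every state in V every trace of T starting there ends in V, then from every state in V every trace of T* starting there ends in V. -/

import Mathlib

/-- A trace over a type `S` of states is a nonempty finite list of elements of `S`. -/
def Trace (S : Type*) := {l : List S // l ≠ []}

namespace Trace

variable {S : Type*}

/-- The head (first element) of a trace. -/
def head (t : Trace S) : S := t.1.head t.2

/-- The last element of a trace. -/
def last (t : Trace S) : S := t.1.getLast t.2

/-- Fusion of two traces: `t₁ ∘ t₂ = t₁ ++ tail t₂` (meaningful when `last t₁ = head t₂`). -/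
def fuse (t₁ t₂ : Trace S) : Trace S :=
  ⟨t₁.1 ++ t₂.1.tail, by simp [t₁.2]⟩

end Trace

variable {S : Type*}

/-- Fusion product of two sets of traces. -/
def fprod (T₁ T₂ : Set (Trace S)) : Set (Trace S) :=
  {t | ∃ t₁ ∈ T₁, ∃ t₂ ∈ T₂, t₁.last = t₂.head ∧ t = t₁.fuse t₂}

/-- The set `I` of all length-1 traces `[s]`, `s ∈ S`. -/
def unitTraces (S : Type*) : Set (Trace S) := {t | ∃ s : S, t.1 = [s]}

/-- Powers of a set of traces under the fusion product: `T⁰ = I`, `Tⁿ⁺¹ = T ∘ Tⁿ`. -/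
def fpow (T : Set (Trace S)) : ℕ → Set (Trace S)
  | 0 => unitTraces S
  | n + 1 => fprod T (fpow T n)

/-- Star of a set of traces under the fusion product: `T* = ⋃ n, Tⁿ`. -/
def fstar (T : Set (Trace S)) : Set (Trace S) := ⋃ n, fpow T n

/-- `box T V`: states from which every trace of `T` ends in `V`. -/
def box (T : Set (Trace S)) (V : Set S) : Set S :=
  {s | ∀ t ∈ T, t.head = s → t.last ∈ V}

/-- `diamond T V`: states from which some trace of `T` ends in `V`. -/
def diamond (T : Set (Trace S)) (V : Set S) : Set S :=
  {s | ∃ t ∈ T, t.head = s ∧ t.last ∈ V}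

/-- `boxAlways T V`: states from which every trace of `T` lies entirely in `V`. -/
def boxAlways (T : Set (Trace S)) (V : Set S) : Set S :=
  {s | ∀ t ∈ T, t.head = s → ∀ x ∈ t.1, x ∈ V}


/-! `V` is invariant under every power `Tⁿ`, by induction on `n`: a trace of `Tⁿ⁺¹ = T ∘ Tⁿ`
starting in `V` is a `T`-trace, which ends in `V`, fused with a `Tⁿ`-trace starting from that
endpoint. Every trace of `T*` lies in some `Tⁿ`. -/

namespace Trace

lemma head_fuse (t₁ t₂ : Trace S) : (t₁.fuse t₂).head = t₁.head := by
  obtain ⟨_ | ⟨_, _⟩, hl⟩ := t₁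
  · exact absurd rfl hl
  · rfl

lemma last_fuse {t₁ t₂ : Trace S} (h : t₁.last = t₂.head) : (t₁.fuse t₂).last = t₂.last := by
  obtain ⟨_ | ⟨_, _ | ⟨_, _⟩⟩, hl⟩ := t₂
  · exact absurd rfl hl
  · simpa [fuse, last, head] using h
  · simp [fuse, last, List.getLast_append_of_ne_nil]

lemma last_eq_head_of_mem_unitTraces {t : Trace S} (ht : t ∈ unitTraces S) : t.last = t.head := by
  obtain ⟨s, hs⟩ := ht
  simp [last, head, hs]

end Trace

lemma box_mono {T : Set (Trace S)} {V W : Set S} (hVW : V ⊆ W) : box T V ⊆ box T W :=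
  fun _ hs t ht hhead => hVW (hs t ht hhead)

lemma box_unitTraces (V : Set S) : box (unitTraces S) V = V := by
  ext s
  refine ⟨fun hs => ?_, fun hs t ht hhead => ?_⟩
  · exact hs ⟨[s], List.cons_ne_nil s []⟩ ⟨s, rfl⟩ rfl
  · rwa [Trace.last_eq_head_of_mem_unitTraces ht, hhead]

lemma box_box_subset_box_fprod (T₁ T₂ : Set (Trace S)) (V : Set S) :
    box T₁ (box T₂ V) ⊆ box (fprod T₁ T₂) V := by
  rintro s hs _ ⟨t₁, ht₁, t₂, ht₂, hmatch, rfl⟩ hhead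
  rw [Trace.last_fuse hmatch]
  exact hs t₁ ht₁ (by rwa [Trace.head_fuse] at hhead) t₂ ht₂ hmatch.symm

lemma box_iUnion {ι : Sort*} (T : ι → Set (Trace S)) (V : Set S) :
    box (⋃ i, T i) V = ⋂ i, box (T i) V := by
  ext s
  refine ⟨fun hs => Set.mem_iInter.2 fun i t ht => hs t (Set.mem_iUnion.2 ⟨i, ht⟩), fun hs t ht => ?_⟩
  obtain ⟨i, hi⟩ := Set.mem_iUnion.1 ht
  exact Set.mem_iInter.1 hs i t hi

lemma subset_box_fpow {T : Set (Trace S)} {V : Set S} (h : V ⊆ box T V) :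
    ∀ n, V ⊆ box (fpow T n) V
  | 0 => (box_unitTraces V).superset
  | n + 1 => calc
      V ⊆ box T V := h
      _ ⊆ box T (box (fpow T n) V) := box_mono (subset_box_fpow h n)
      _ ⊆ box (fpow T (n + 1)) V := box_box_subset_box_fprod T (fpow T n) V

/-- semantic soundness of the induction rule for star. -/
theorem box_star_induction {S : Type*} (T : Set (Trace S)) (V : Set S)
    (h : V ⊆ box T V) : V ⊆ box (fstar T) V := by
  rw [fstar, box_iUnion]
  exact Set.subset_iInter (subset_box_fpow h)
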